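/- arXiv:2202.10278 — 10 statements merged into one kernel-verified Lean document; each statement's English description precedes it below -/
import Mathlib

section
/- Let X be a set and c : Ultrafilter X → X a map, and let C be the graph relation of c, i.e. C 𝔵 y ↔ c 𝔵 = y. Then C is a U-space (i.e. reflexive and transitive) if and only if c satisfies the Eilenberg–Moore algebra laws for the ultrafilter monad: c (pure x) = x for all x ∈ X, and c (Ultrafilter.map c 𝔛) = c (Ultrafilter.bind 𝔛 id) for all 𝔛 : Ultrafilter (Ultrafilter X). Moreover, if d : Ultrafilter Y → Y also satisfies these laws, then a map f : X → Y is monotone from the graph of c to the graph of d if and only if d ∘ Ultrafilter.map f = f ∘ c. -/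
universe u

/-- The extension `Ĉ` of a U-graph `C` to ultrafilters of ultrafilters. -/
def UGraph.hat {X : Type u} (C : Ultrafilter X → X → Prop) :
    Ultrafilter (Ultrafilter X) → Ultrafilter X → Prop := fun 𝔛 𝔶 =>
  ∃ 𝔴 : Ultrafilter {p : Ultrafilter X × X // C p.1 p.2},
    Ultrafilter.map (fun p => p.val.1) 𝔴 = 𝔛 ∧ Ultrafilter.map (fun p => p.val.2) 𝔴 = 𝔶

/-- Reflexivity of a U-graph. -/
def UGraph.Refl {X : Type u} (C : Ultrafilter X → X → Prop) : Prop :=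
  ∀ x : X, C (pure x) x

/-- Transitivity of a U-graph. -/
def UGraph.Trans {X : Type u} (C : Ultrafilter X → X → Prop) : Prop :=
  ∀ (𝔛 : Ultrafilter (Ultrafilter X)) (𝔶 : Ultrafilter X) (z : X),
    UGraph.hat C 𝔛 𝔶 → C 𝔶 z → C (Ultrafilter.bind 𝔛 id) z

/-- Monotone maps of U-graphs. -/
def UGraph.Mono {X Y : Type u} (CX : Ultrafilter X → X → Prop)
    (CY : Ultrafilter Y → Y → Prop) (f : X → Y) : Prop :=
  ∀ (𝔵 : Ultrafilter X) (y : X), CX 𝔵 y → CY (Ultrafilter.map f 𝔵) (f y)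


/-!
For the graph of `c`, the extension `Ĉ` is the graph of `Ultrafilter.map c`: an ultrafilter on
the graph is determined by its first projection, being its image under `𝔵 ↦ (𝔵, c 𝔵)`.
Transitivity then becomes the associativity law `c (map c 𝔛) = c (Σ𝔛)`, reflexivity is the unit
law, and monotonicity of `f` unfolds to `d (map f 𝔵) = f (c 𝔵)`.
-/

namespace UGraph

variable {X : Type u}

def ofFun (c : Ultrafilter X → X) : Ultrafilter X → X → Prop := fun 𝔵 y => c 𝔵 = y

theorem hat_ofFun_iff (c : Ultrafilter X → X) (𝔛 : Ultrafilter (Ultrafilter X))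
    (𝔶 : Ultrafilter X) : hat (ofFun c) 𝔛 𝔶 ↔ 𝔛.map c = 𝔶 := by
  constructor
  · rintro ⟨𝔴, rfl, rfl⟩
    rw [Ultrafilter.map_map]
    congr 1
    funext p
    exact p.2
  · rintro rfl
    refine ⟨𝔛.map fun 𝔵 => ⟨(𝔵, c 𝔵), rfl⟩, ?_, ?_⟩ <;> rw [Ultrafilter.map_map] <;> rfl

theorem trans_ofFun_iff (c : Ultrafilter X → X) :
    Trans (ofFun c) ↔ ∀ 𝔛 : Ultrafilter (Ultrafilter X), c (𝔛.map c) = c (𝔛.bind id) := by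
  constructor
  · intro h 𝔛
    exact (h 𝔛 _ _ ((hat_ofFun_iff c 𝔛 _).2 rfl) rfl).symm
  · rintro h 𝔛 𝔶 _ h𝔶 rfl
    obtain rfl := (hat_ofFun_iff c 𝔛 𝔶).1 h𝔶
    exact (h 𝔛).symm

theorem mono_ofFun_iff {Y : Type u} (c : Ultrafilter X → X) (d : Ultrafilter Y → Y)
    (f : X → Y) : Mono (ofFun c) (ofFun d) f ↔ d ∘ Ultrafilter.map f = f ∘ c := by
  constructor
  · intro h
    funext 𝔵
    exact h 𝔵 _ rfl
  · rintro h 𝔵 _ rfl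
    exact congrFun h 𝔵

end UGraph

theorem stmt0 {X : Type u} (c : Ultrafilter X → X) (C : Ultrafilter X → X → Prop)
    (hC : ∀ (𝔵 : Ultrafilter X) (y : X), C 𝔵 y ↔ c 𝔵 = y) :
    ((UGraph.Refl C ∧ UGraph.Trans C) ↔
      ((∀ x : X, c (pure x) = x) ∧
        ∀ 𝔛 : Ultrafilter (Ultrafilter X),
          c (Ultrafilter.map c 𝔛) = c (Ultrafilter.bind 𝔛 id))) ∧
    (∀ {Y : Type u} (d : Ultrafilter Y → Y),
      (∀ y : Y, d (pure y) = y) →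
      (∀ 𝔜 : Ultrafilter (Ultrafilter Y),
        d (Ultrafilter.map d 𝔜) = d (Ultrafilter.bind 𝔜 id)) →
      ∀ f : X → Y,
        (UGraph.Mono C (fun 𝔶 z => d 𝔶 = z) f ↔ d ∘ Ultrafilter.map f = f ∘ c)) := by
  obtain rfl : C = UGraph.ofFun c := by
    funext 𝔵 y
    exact propext (hC 𝔵 y)
  exact ⟨and_congr Iff.rfl (UGraph.trans_ofFun_iff c),
    fun d _ _ f => UGraph.mono_ofFun_iff c d f⟩
end

section
/- (Tychonoff for U-spaces) Let (X i, C i), i : I, be a family of U-spaces each satisfying (K). Equip the product set Π i, X i with the product (initial) U-graph structure: C 𝔵 y iff for every i, C i (Ultrafilter.map (fun g => g i) 𝔵) (y i). Then the product U-graph satisfies (K): every ultrafilter on Π i, X i converges to at least one point. -/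
universe u

theorem stmt2_general {I : Type u} {X : I → Type u} (C : ∀ i, Ultrafilter (X i) → X i → Prop)
    (hK : ∀ i (𝔵 : Ultrafilter (X i)), ∃ y : X i, C i 𝔵 y)
    (𝔵 : Ultrafilter (∀ i, X i)) :
    ∃ y : ∀ i, X i, ∀ i, C i (Ultrafilter.map (fun g : ∀ j, X j => g i) 𝔵) (y i) := by
  choose y hy using fun i => hK i (Ultrafilter.map (fun g : ∀ j, X j => g i) 𝔵)
  exact ⟨y, hy⟩

theorem stmt2 {I : Type u} {X : I → Type u} (C : ∀ i, Ultrafilter (X i) → X i → Prop)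
    (hspace : ∀ i, UGraph.Refl (C i) ∧ UGraph.Trans (C i))
    (hK : ∀ i (𝔵 : Ultrafilter (X i)), ∃ y : X i, C i 𝔵 y)
    (𝔵 : Ultrafilter (∀ i, X i)) :
    ∃ y : ∀ i, X i, ∀ i, C i (Ultrafilter.map (fun g : ∀ j, X j => g i) 𝔵) (y i) :=
  stmt2_general C hK 𝔵
end

section
/- Let (X, C) be a reflexive U-graph, let (Y, d) be a U-algebra, i.e. d : Ultrafilter Y → Y satisfies d (pure y) = y for all y and d (Ultrafilter.map d 𝔜) = d (Ultrafilter.bind 𝔜 id) for all 𝔜, and let f : X → Y be a map. Writing f♯ := d ∘ Ultrafilter.map f : Ultrafilter X → Y, the following are equivalent: (i) f is monotone from (X, C) to the graph of d, i.e. C 𝔵 x implies f♯ 𝔵 = f x; (ii) for all 𝔵, 𝔷 : Ultrafilter X and x ∈ X, if C 𝔵 x and C 𝔷 x then f♯ 𝔵 = f♯ 𝔷. -/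
universe u

theorem stmt5_general {X Y : Type u} (C : Ultrafilter X → X → Prop)
    (hrefl : ∀ x : X, C (pure x) x)
    (d : Ultrafilter Y → Y)
    (hd1 : ∀ y : Y, d (pure y) = y)
    (f : X → Y) :
    (∀ (𝔵 : Ultrafilter X) (x : X), C 𝔵 x → d (Ultrafilter.map f 𝔵) = f x) ↔
    (∀ (𝔵 𝔷 : Ultrafilter X) (x : X), C 𝔵 x → C 𝔷 x →
      d (Ultrafilter.map f 𝔵) = d (Ultrafilter.map f 𝔷)) := by
  refine ⟨fun hmono 𝔵 𝔷 x h𝔵 h𝔷 => by rw [hmono 𝔵 x h𝔵, hmono 𝔷 x h𝔷], fun hconst 𝔵 x h𝔵 => ?_⟩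
  simpa only [Ultrafilter.map_pure, hd1] using hconst 𝔵 (pure x) x h𝔵 (hrefl x)

theorem stmt5 {X Y : Type u} (C : Ultrafilter X → X → Prop)
    (hrefl : ∀ x : X, C (pure x) x)
    (d : Ultrafilter Y → Y)
    (hd1 : ∀ y : Y, d (pure y) = y)
    (hd2 : ∀ 𝔜 : Ultrafilter (Ultrafilter Y),
      d (Ultrafilter.map d 𝔜) = d (Ultrafilter.bind 𝔜 id))
    (f : X → Y) :
    (∀ (𝔵 : Ultrafilter X) (x : X), C 𝔵 x → d (Ultrafilter.map f 𝔵) = f x) ↔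
    (∀ (𝔵 𝔷 : Ultrafilter X) (x : X), C 𝔵 x → C 𝔷 x →
      d (Ultrafilter.map f 𝔵) = d (Ultrafilter.map f 𝔷)) :=
  stmt5_general C hrefl d hd1 f
end

section
/- (Čech–Stone reflection of reflexive U-graphs) Let (X, C) be a reflexive U-graph. Then there exist a compact Hausdorff topological space Q and a map e : X → Q such that: (a) e is monotone, i.e. C 𝔵 y implies that the ultrafilter Ultrafilter.map e 𝔵 converges to e y in Q (its underlying filter is ≤ 𝓝 (e y)); and (b) for every compact Hausdorff topological space K and every map f : X → K such that C 𝔵 y implies Ultrafilter.map f 𝔵 converges to f y, there is a unique continuous map g : Q → K with g ∘ e = f. -/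
universe u

open Filter Topology

theorem stmt6 {X : Type u} (C : Ultrafilter X → X → Prop)
    (hrefl : ∀ x : X, C (pure x) x) :
    ∃ (Q : Type u) (tQ : TopologicalSpace Q),
      @CompactSpace Q tQ ∧ @T2Space Q tQ ∧
      ∃ e : X → Q,
        (∀ (𝔵 : Ultrafilter X) (y : X), C 𝔵 y →
          ↑(Ultrafilter.map e 𝔵) ≤ @nhds Q tQ (e y)) ∧
        ∀ (K : Type u) (tK : TopologicalSpace K),
          @CompactSpace K tK → @T2Space K tK →
          ∀ f : X → K,
            (∀ (𝔵 : Ultrafilter X) (y : X), C 𝔵 y →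
              ↑(Ultrafilter.map f 𝔵) ≤ @nhds K tK (f y)) →
            ∃! g : Q → K, @Continuous Q K tQ tK g ∧ g ∘ e = f := by
  classical
  -- relation on βX = Ultrafilter X identifying 𝔵 with pure y when C 𝔵 y
  set r : Ultrafilter X → Ultrafilter X → Prop :=
    fun 𝔵 𝔶 => ∃ y : X, 𝔶 = pure y ∧ C 𝔵 y with hr
  let B := Quot r
  let Q := T2Quotient B
  refine ⟨Q, inferInstance, ?_, inferInstance, ?_⟩
  · -- compactness : Q is a quotient of the compact space Ultrafilter X
    constructor
    have : Set.univ (α := Q) =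
        (T2Quotient.mk ∘ Quot.mk r) '' Set.univ := by
      ext q
      simp only [Set.image_univ, Set.mem_univ, true_iff]
      obtain ⟨b, rfl⟩ := T2Quotient.surjective_mk B q
      obtain ⟨x, rfl⟩ := Quot.exists_rep b
      exact ⟨x, rfl⟩
    rw [this]
    exact isCompact_univ.image
      ((T2Quotient.continuous_mk B).comp continuous_quot_mk)
  · -- the map e
    let q : Ultrafilter X → Q := fun 𝔵 => T2Quotient.mk (Quot.mk r 𝔵)
    have hq : Continuous q := (T2Quotient.continuous_mk B).comp continuous_quot_mk
    have hqid : ∀ (𝔵 : Ultrafilter X) (y : X), C 𝔵 y → q 𝔵 = q (pure y) := by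
      intro 𝔵 y h
      show T2Quotient.mk _ = T2Quotient.mk _
      exact congrArg _ (Quot.sound ⟨y, rfl, h⟩)
    refine ⟨fun x => q (pure x), ?_, ?_⟩
    · -- monotonicity
      intro 𝔵 y h
      have h1 : ↑(Ultrafilter.map (pure : X → Ultrafilter X) 𝔵) ≤ 𝓝 𝔵 := by
        rw [ultrafilter_converges_iff]
        exact (bind_pure 𝔵).symm
      have h2 : Tendsto q (𝓝 𝔵) (𝓝 (q 𝔵)) := hq.tendsto 𝔵
      have h3 : ↑(Ultrafilter.map (fun x => q (pure x)) 𝔵) ≤ 𝓝 (q 𝔵) := by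
        have := (Filter.map_mono (m := q) h1).trans h2
        simpa [Ultrafilter.coe_map, Filter.map_map, Function.comp_def] using this
      rwa [hqid 𝔵 y h] at h3
    · -- universal property
      intro K tK hKc hKt2 f hf
      have hcont : Continuous (Ultrafilter.extend f) := continuous_ultrafilter_extend f
      have hresp : ∀ a b : Ultrafilter X, r a b →
          Ultrafilter.extend f a = Ultrafilter.extend f b := by
        rintro a b ⟨y, rfl, hC⟩
        have h1 : Ultrafilter.extend f a = f y :=
          ultrafilter_extend_eq_iff.mpr (hf a y hC)
        have h2 : Ultrafilter.extend f (pure y) = f y :=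
          congrFun (ultrafilter_extend_extends f) y
        rw [h1, h2]
      let g₁ : B → K := Quot.lift (Ultrafilter.extend f) hresp
      have hg₁ : Continuous g₁ := by
        rw [continuous_coinduced_dom]
        exact hcont
      refine ⟨T2Quotient.lift hg₁, ⟨T2Quotient.continuous_lift hg₁, ?_⟩, ?_⟩
      · funext x
        show T2Quotient.lift hg₁ (T2Quotient.mk (Quot.mk r (pure x))) = f x
        rw [T2Quotient.lift_mk]
        exact congrFun (ultrafilter_extend_extends f) x
      · -- uniqueness via density of the range of e
        rintro g' ⟨hg'c, hg'e⟩
        have hdq : DenseRange q :=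
          ((T2Quotient.surjective_mk B).comp (fun b => Quot.exists_rep b)).denseRange
        have hde : DenseRange (fun x : X => q (pure x)) :=
          hdq.comp denseRange_pure hq
        apply hde.equalizer hg'c (T2Quotient.continuous_lift hg₁)
        funext x
        have : g' (q (pure x)) = f x := congrFun hg'e x
        simp only [Function.comp_apply, this]
        show f x = T2Quotient.lift hg₁ (T2Quotient.mk (Quot.mk r (pure x)))
        rw [T2Quotient.lift_mk]
        exact (congrFun (ultrafilter_extend_extends f) x).symm
end

section
/- (Tychonoff reflection) For every topological space X there exist a topological space A that is completely regular and T1 (i.e. a T3.5 / Tychonoff space) and a continuous surjection α : X → A such that for every Tychonoff space Z and every continuous map f : X → Z there is a unique continuous map g : A → Z with g ∘ α = f. -/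
/-!
The Tychonoff reflection of `X` is the image of `X` in its Stone–Čech compactification: as a
subspace of a compact Hausdorff space it is Tychonoff, and a continuous `f : X → Z` into a
Tychonoff space factors through it because `Z` embeds into `βZ`, so that the extension
`βX → βZ` of `X → Z → βZ` carries the image of `X` into the image of `Z`.
-/

universe u

open Function Topology

section Factorization

variable {X A Z W : Type*} [TopologicalSpace A] [TopologicalSpace Z] [TopologicalSpace W]

theorem Function.Surjective.exists_continuous_comp_eq_of_isEmbedding {α : X → A}
    (hα : Surjective α) {ι : Z → W} (hι : IsEmbedding ι) {h : A → W} (hh : Continuous h)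
    {f : X → Z} (hf : h ∘ α = ι ∘ f) : ∃ g : A → Z, Continuous g ∧ g ∘ α = f := by
  have hιf : ∀ x, ι (f x) = h (α x) := fun x => (congrFun hf x).symm
  have hfα : ∀ x, f (surjInv hα (α x)) = f x := fun x =>
    hι.injective (by rw [hιf, hιf, surjInv_eq hα])
  have hιg : ι ∘ f ∘ surjInv hα = h := funext fun a => by
    rw [comp_apply, comp_apply, hιf, surjInv_eq hα]
  exact ⟨f ∘ surjInv hα, hι.isInducing.continuous_iff.mpr (hιg ▸ hh), funext hfα⟩

end Factorization

section TychonoffReflection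

variable (X : Type u) [TopologicalSpace X]

abbrev TychonoffReflection : Type u :=
  Set.range (stoneCechUnit : X → StoneCech X)

variable {X}

def toTychonoffReflection : X → TychonoffReflection X :=
  Set.rangeFactorization stoneCechUnit

theorem continuous_toTychonoffReflection : Continuous (toTychonoffReflection (X := X)) :=
  continuous_stoneCechUnit.rangeFactorization

theorem surjective_toTychonoffReflection : Surjective (toTychonoffReflection (X := X)) :=
  Set.rangeFactorization_surjective

theorem exists_continuous_comp_toTychonoffReflection_eq {Z : Type u} [TopologicalSpace Z]
    [T35Space Z] {f : X → Z} (hf : Continuous f) :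
    ∃ g : TychonoffReflection X → Z, Continuous g ∧ g ∘ toTychonoffReflection = f := by
  have hu : Continuous (stoneCechUnit ∘ f) := continuous_stoneCechUnit.comp hf
  refine surjective_toTychonoffReflection.exists_continuous_comp_eq_of_isEmbedding
    isEmbedding_stoneCechUnit ((continuous_stoneCechExtend hu).comp continuous_subtype_val) ?_
  exact stoneCechExtend_extends hu

end TychonoffReflection

theorem stmt9 (X : Type u) [TopologicalSpace X] :
    ∃ (A : Type u) (tA : TopologicalSpace A),
      @T35Space A tA ∧
      ∃ α : X → A,
        @Continuous X A _ tA α ∧ Function.Surjective α ∧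
        ∀ (Z : Type u) (tZ : TopologicalSpace Z), @T35Space Z tZ →
          ∀ f : X → Z, @Continuous X Z _ tZ f →
            ∃! g : A → Z, @Continuous A Z tA tZ g ∧ g ∘ α = f := by
  refine ⟨TychonoffReflection X, inferInstance, inferInstance, toTychonoffReflection,
    continuous_toTychonoffReflection, surjective_toTychonoffReflection, ?_⟩
  intro Z _ _ f hf
  obtain ⟨g, hg, hgf⟩ := exists_continuous_comp_toTychonoffReflection_eq hf
  exact ⟨g, ⟨hg, hgf⟩, fun g' ⟨_, hg'f⟩ =>
    surjective_toTychonoffReflection.injective_comp_right (hg'f.trans hgf.symm)⟩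
end

section
/- (Barr) Let X be a set and C : Ultrafilter X → X → Prop a relation. Then C is reflexive and transitive (i.e. a U-space structure) if and only if there exists a topology t on X such that for all 𝔵 : Ultrafilter X and y ∈ X one has C 𝔵 y ↔ (↑𝔵 ≤ 𝓝 y in (X, t)); moreover such a topology t is unique. Furthermore, if (X, C_X) and (Y, C_Y) are U-spaces with corresponding topologies t_X, t_Y, then a map f : X → Y is monotone (C_X 𝔵 y implies C_Y (Ultrafilter.map f 𝔵) (f y)) if and only if f is continuous from (X, t_X) to (Y, t_Y). -/
universe u

variable {X : Type u}

lemma mem_ubind {𝔛 : Ultrafilter (Ultrafilter X)} {s : Set X} :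
    s ∈ Ultrafilter.bind 𝔛 id ↔ {𝔷 : Ultrafilter X | s ∈ 𝔷} ∈ 𝔛 :=
  Filter.mem_bind'

/-- topology induced by a U-graph -/
def UGraph.toTop (C : Ultrafilter X → X → Prop) : TopologicalSpace X where
  IsOpen U := ∀ (𝔵 : Ultrafilter X) (y : X), C 𝔵 y → y ∈ U → U ∈ 𝔵
  isOpen_univ := fun 𝔵 _ _ _ => Filter.univ_mem
  isOpen_inter := fun U V hU hV 𝔵 y hC hy =>
    Filter.inter_mem (hU 𝔵 y hC hy.1) (hV 𝔵 y hC hy.2)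
  isOpen_sUnion := fun S hS 𝔵 y hC hy => by
    obtain ⟨U, hU, hyU⟩ := hy
    exact Filter.mem_of_superset (hS U hU 𝔵 y hC hyU) (Set.subset_sUnion_of_mem hU)

def UGraph.cl (C : Ultrafilter X → X → Prop) (A : Set X) : Set X :=
  {z | ∃ 𝔷 : Ultrafilter X, A ∈ 𝔷 ∧ C 𝔷 z}

lemma subset_cl {C : Ultrafilter X → X → Prop} (hr : UGraph.Refl C) (A : Set X) :
    A ⊆ UGraph.cl C A := fun z hz => ⟨pure z, Ultrafilter.mem_pure.2 hz, hr z⟩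

lemma cl_compl_open {C : Ultrafilter X → X → Prop} (hr : UGraph.Refl C)
    (ht : UGraph.Trans C) (A : Set X) :
    @IsOpen X (UGraph.toTop C) (UGraph.cl C A)ᶜ := by
  intro 𝔶 w hC hw
  rw [Ultrafilter.compl_mem_iff_notMem]
  intro hmem
  apply hw
  classical
  let pick : X → Ultrafilter X := fun z =>
    if h : z ∈ UGraph.cl C A then h.choose else pure z
  have hpickC : ∀ z, C (pick z) z := by
    intro z
    by_cases h : z ∈ UGraph.cl C A
    · simpa [pick, h] using h.choose_spec.2
    · simpa [pick, h] using hr z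
  have hpickA : ∀ z ∈ UGraph.cl C A, A ∈ pick z := by
    intro z h
    simpa [pick, h] using h.choose_spec.1
  let g : X → {p : Ultrafilter X × X // C p.1 p.2} := fun z => ⟨(pick z, z), hpickC z⟩
  let 𝔴 := Ultrafilter.map g 𝔶
  have hsnd : Ultrafilter.map (fun p => p.val.2) 𝔴 = 𝔶 := by
    rw [← Ultrafilter.coe_le_coe]
    intro s hs
    rw [Ultrafilter.mem_coe, Ultrafilter.mem_map, Ultrafilter.mem_map]
    exact hs
  have hhat : UGraph.hat C (Ultrafilter.map (fun p => p.val.1) 𝔴) 𝔶 := ⟨𝔴, rfl, hsnd⟩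
  have hCb := ht _ 𝔶 w hhat hC
  refine ⟨_, ?_, hCb⟩
  rw [mem_ubind, Ultrafilter.mem_map, Ultrafilter.mem_map]
  exact Filter.mem_of_superset hmem fun z hz => hpickA z hz

lemma key {C : Ultrafilter X → X → Prop} (hr : UGraph.Refl C) (ht : UGraph.Trans C)
    {𝔵 : Ultrafilter X} {y : X} (h : ↑𝔵 ≤ @nhds X (UGraph.toTop C) y) : C 𝔵 y := by
  classical
  letI : TopologicalSpace X := UGraph.toTop C
  have step1 : ∀ A ∈ 𝔵, ∃ 𝔷 : Ultrafilter X, A ∈ 𝔷 ∧ C 𝔷 y := by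
    intro A hA
    by_contra hno
    have hyc : y ∈ (UGraph.cl C A)ᶜ := fun hy => hno ⟨hy.choose, hy.choose_spec⟩
    have h1 : (UGraph.cl C A)ᶜ ∈ 𝔵 :=
      le_nhds_iff.1 h _ hyc (cl_compl_open hr ht A)
    have h2 : (UGraph.cl C A)ᶜ ∩ A ∈ 𝔵 := Filter.inter_mem h1 hA
    obtain ⟨z, hz1, hz2⟩ := 𝔵.neBot.nonempty_of_mem h2
    exact hz1 (subset_cl hr A hz2)
  set B : Set (Ultrafilter X) := {𝔷 | C 𝔷 y} with hB
  let F : {A : Set X // A ∈ 𝔵} → Filter (Ultrafilter X) :=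
    fun A => Filter.principal ({𝔷 | A.1 ∈ 𝔷} ∩ B)
  have hne : Nonempty {A : Set X // A ∈ 𝔵} := ⟨⟨Set.univ, Filter.univ_mem⟩⟩
  have hdir : Directed (· ≥ ·) F := by
    rintro ⟨A, hA⟩ ⟨A', hA'⟩
    refine ⟨⟨A ∩ A', Filter.inter_mem hA hA'⟩, ?_, ?_⟩ <;>
      · simp only [F, ge_iff_le, Filter.principal_mono]
        intro 𝔷 h𝔷
        exact ⟨Filter.mem_of_superset h𝔷.1 (by intro a ha; simp_all), h𝔷.2⟩
  have hFne : ∀ A, (F A).NeBot := by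
    rintro ⟨A, hA⟩
    obtain ⟨𝔷, h1, h2⟩ := step1 A hA
    exact Filter.principal_neBot_iff.2 ⟨𝔷, h1, h2⟩
  have hNB : (⨅ A, F A).NeBot := Filter.iInf_neBot_of_directed' hdir hFne
  obtain ⟨𝔛, h𝔛⟩ := Filter.exists_ultrafilter_le (⨅ A, F A)
  have hmemB : B ∈ 𝔛 := by
    have : ({𝔷 : Ultrafilter X | Set.univ ∈ 𝔷} ∩ B) ∈ 𝔛 :=
      h𝔛 (Filter.mem_iInf_of_mem ⟨Set.univ, Filter.univ_mem⟩ (Filter.mem_principal_self _))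
    exact Filter.mem_of_superset this Set.inter_subset_right
  have hbind : Ultrafilter.bind 𝔛 id = 𝔵 := by
    rw [← Ultrafilter.coe_le_coe]
    intro s hs
    rw [Ultrafilter.mem_coe, mem_ubind]
    have : ({𝔷 : Ultrafilter X | s ∈ 𝔷} ∩ B) ∈ 𝔛 :=
      h𝔛 (Filter.mem_iInf_of_mem ⟨s, hs⟩ (Filter.mem_principal_self _))
    exact Filter.mem_of_superset this Set.inter_subset_left
  have hXne : Nonempty X := Filter.nonempty_of_neBot ↑𝔵
  obtain ⟨x₀⟩ := hXne
  let g : Ultrafilter X → {p : Ultrafilter X × X // C p.1 p.2} := fun 𝔷 =>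
    if h : C 𝔷 y then ⟨(𝔷, y), h⟩ else ⟨(pure x₀, x₀), hr x₀⟩
  let 𝔴 := Ultrafilter.map g 𝔛
  have hfst : Ultrafilter.map (fun p => p.val.1) 𝔴 = 𝔛 := by
    rw [← Ultrafilter.coe_le_coe]
    intro s hs
    rw [Ultrafilter.mem_coe, Ultrafilter.mem_map, Ultrafilter.mem_map]
    rw [Ultrafilter.mem_coe] at hs
    filter_upwards [hmemB, hs] with 𝔷 h𝔷 hzs
    have hC : C 𝔷 y := h𝔷
    simp only [g, Set.mem_preimage, dif_pos hC]
    exact hzs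
  have hsnd : Ultrafilter.map (fun p => p.val.2) 𝔴 = pure y := by
    rw [← Ultrafilter.coe_le_coe]
    intro s hs
    have hy : y ∈ s := hs
    rw [Ultrafilter.mem_coe, Ultrafilter.mem_map, Ultrafilter.mem_map]
    filter_upwards [hmemB] with 𝔷 h𝔷
    have hC : C 𝔷 y := h𝔷
    simp only [g, Set.mem_preimage, dif_pos hC]
    exact hy
  have hfin := ht 𝔛 (pure y) y ⟨𝔴, hfst, hsnd⟩ (hr y)
  rwa [hbind] at hfin

lemma topo_gives_uspace {t : TopologicalSpace X} {C : Ultrafilter X → X → Prop}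
    (h : ∀ (𝔵 : Ultrafilter X) (y : X), C 𝔵 y ↔ ↑𝔵 ≤ @nhds X t y) :
    UGraph.Refl C ∧ UGraph.Trans C := by
  letI := t
  constructor
  · intro x
    exact (h _ _).2 (by simpa using pure_le_nhds x)
  · rintro 𝔛 𝔶 z ⟨𝔴, hfst, hsnd⟩ hC
    rw [h] at hC ⊢
    rw [le_nhds_iff] at hC ⊢
    intro s hzs hs
    rw [Ultrafilter.mem_coe, mem_ubind, ← hfst, Ultrafilter.mem_map]
    have hU : s ∈ 𝔶 := hC s hzs hs
    rw [← hsnd, Ultrafilter.mem_map] at hU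
    filter_upwards [hU] with p hp
    have := (h p.val.1 p.val.2).1 p.property
    exact Set.mem_setOf.2 (le_nhds_iff.1 this s hp hs)

theorem stmt10 :
    (∀ (X : Type u) (C : Ultrafilter X → X → Prop),
      (UGraph.Refl C ∧ UGraph.Trans C) ↔
        ∃ t : TopologicalSpace X,
          ∀ (𝔵 : Ultrafilter X) (y : X), C 𝔵 y ↔ ↑𝔵 ≤ @nhds X t y) ∧
    (∀ (X : Type u) (C : Ultrafilter X → X → Prop) (t t' : TopologicalSpace X),
      (∀ (𝔵 : Ultrafilter X) (y : X), C 𝔵 y ↔ ↑𝔵 ≤ @nhds X t y) →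
      (∀ (𝔵 : Ultrafilter X) (y : X), C 𝔵 y ↔ ↑𝔵 ≤ @nhds X t' y) →
      t = t') ∧
    (∀ (X Y : Type u) (CX : Ultrafilter X → X → Prop) (CY : Ultrafilter Y → Y → Prop)
      (tX : TopologicalSpace X) (tY : TopologicalSpace Y),
      (UGraph.Refl CX ∧ UGraph.Trans CX) →
      (UGraph.Refl CY ∧ UGraph.Trans CY) →
      (∀ (𝔵 : Ultrafilter X) (y : X), CX 𝔵 y ↔ ↑𝔵 ≤ @nhds X tX y) →
      (∀ (𝔶 : Ultrafilter Y) (z : Y), CY 𝔶 z ↔ ↑𝔶 ≤ @nhds Y tY z) →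
      ∀ f : X → Y, UGraph.Mono CX CY f ↔ @Continuous X Y tX tY f) := by
  refine ⟨?_, ?_, ?_⟩
  · intro X C
    constructor
    · rintro ⟨hr, ht⟩
      refine ⟨UGraph.toTop C, fun 𝔵 y => ⟨?_, key hr ht⟩⟩
      intro hC
      rw [@le_nhds_iff X (UGraph.toTop C) y ↑𝔵]
      intro s hys hs
      exact hs 𝔵 y hC hys
    · rintro ⟨t, h⟩
      exact topo_gives_uspace h
  · intro X C t t' h h'
    refine TopologicalSpace.ext_nhds fun x => le_antisymm ?_ ?_ <;>
    · rw [Filter.le_iff_ultrafilter]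
      intro g hg
      first
        | exact (h' g x).1 ((h g x).2 hg)
        | exact (h g x).1 ((h' g x).2 hg)
  · intro X Y CX CY tX tY _ _ hX hY f
    letI := tX; letI := tY
    rw [continuous_iff_ultrafilter]
    constructor
    · intro hm x g hg
      have := hm g x ((hX g x).2 hg)
      rw [hY] at this
      exact this
    · intro hc 𝔵 y hC
      rw [hY]
      exact hc y 𝔵 ((hX 𝔵 y).1 hC)
end

section
/- Let X be a set and C : Set X → X → Prop a relation satisfying: (R) C {x} x for all x; (T) for every index type I, all families A : I → Set X, y : I → X and every z ∈ X, if C (A i) (y i) for all i and C (Set.range y) z, then C (⋃ i, A i) z; and (Clo) if C A y and A ⊆ B then C B y. Define c : Set X → Set X by c A = {y | C A y}. Then A ⊆ c A for all A, and for all A, B: B ⊆ c A implies c B ⊆ c A (so c is a closure operator: extensive, monotone, idempotent). Conversely, if c : Set X → Set X is extensive (A ⊆ c A), monotone (A ⊆ B → c A ⊆ c B) and idempotent (c (c A) = c A), then the relation C A y := y ∈ c A satisfies (R), (T) and (Clo). -/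
universe u

section Relation

variable {X : Type u} {C : Set X → X → Prop}

theorem subset_setOf_of_singleton (hR : ∀ x : X, C {x} x)
    (hClo : ∀ (A B : Set X) (y : X), C A y → A ⊆ B → C B y) (A : Set X) :
    A ⊆ {y | C A y} :=
  fun x hx => hClo {x} A x (hR x) (Set.singleton_subset_iff.mpr hx)

/-- Apply (T) to the family indexed by the points of `B`, each covered by the same set `A`. -/
theorem setOf_subset_setOf_of_subset_setOf
    (hT : ∀ (I : Type u) (A : I → Set X) (y : I → X) (z : X),
      (∀ i, C (A i) (y i)) → C (Set.range y) z → C (⋃ i, A i) z)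
    (hClo : ∀ (A B : Set X) (y : X), C A y → A ⊆ B → C B y) {A B : Set X}
    (hBA : B ⊆ {y | C A y}) : {y | C B y} ⊆ {y | C A y} := by
  intro z hz
  have hUnion : C (⋃ _ : B, A) z :=
    hT B (fun _ => A) Subtype.val z (fun b => hBA b.2) (by rwa [Subtype.range_coe])
  exact hClo _ A z hUnion (Set.iUnion_subset fun _ => subset_rfl)

end Relation

theorem ClosureOperator.mem_iUnion_of_mem_range {X : Type*} {ι : Sort*}
    (c : ClosureOperator (Set X)) {A : ι → Set X} {y : ι → X} {z : X}
    (hy : ∀ i, y i ∈ c (A i)) (hz : z ∈ c (Set.range y)) : z ∈ c (⋃ i, A i) :=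
  have hrange : Set.range y ⊆ c (⋃ i, A i) :=
    Set.range_subset_iff.mpr fun i => c.monotone (Set.subset_iUnion A i) (hy i)
  c.le_closure_iff.mp hrange hz

theorem stmt11 {X : Type u} :
    (∀ C : Set X → X → Prop,
      (∀ x : X, C {x} x) →
      (∀ (I : Type u) (A : I → Set X) (y : I → X) (z : X),
        (∀ i, C (A i) (y i)) → C (Set.range y) z → C (⋃ i, A i) z) →
      (∀ (A B : Set X) (y : X), C A y → A ⊆ B → C B y) →
      ((∀ A : Set X, A ⊆ {y | C A y}) ∧
        ∀ A B : Set X, B ⊆ {y | C A y} → {y | C B y} ⊆ {y | C A y})) ∧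
    (∀ c : Set X → Set X,
      (∀ A : Set X, A ⊆ c A) →
      (∀ A B : Set X, A ⊆ B → c A ⊆ c B) →
      (∀ A : Set X, c (c A) = c A) →
      ((∀ x : X, x ∈ c {x}) ∧
        (∀ (I : Type u) (A : I → Set X) (y : I → X) (z : X),
          (∀ i, y i ∈ c (A i)) → z ∈ c (Set.range y) → z ∈ c (⋃ i, A i)) ∧
        (∀ (A B : Set X) (y : X), y ∈ c A → A ⊆ B → y ∈ c B))) := by
  refine ⟨fun C hR hT hClo => ⟨subset_setOf_of_singleton hR hClo,
    fun _ _ => setOf_subset_setOf_of_subset_setOf hT hClo⟩, ?_⟩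
  intro c hext hmono hidem
  let closure : ClosureOperator (Set X) :=
    .mk' c (fun A B => hmono A B) hext fun A => (hidem A).le
  exact ⟨fun x => hext {x} rfl, fun _ _ _ _ => closure.mem_iUnion_of_mem_range,
    fun A B _ hy hAB => hmono A B hAB hy⟩
end

section
/- There exist a type X with exactly three elements and a relation C : Set X → X → Prop satisfying the P-space axioms (R) and (T) as well as condition (H) (for every A ⊆ X, C A y and C A z imply y = z), such that the relation x ≤ y defined by C {x, y} y is not transitive. -/
/-!
On a partial order, "`y` is the greatest element of `A`" satisfies (R), (T) and (H). Remove from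
it the single instance `C {a, b} b`, for some `a < b`. Condition (T) survives: if `{a, b}` is a
union of sets `A i ≠ {a, b}` with greatest elements `y i`, each `A i` is the singleton `{y i}`,
so the `y i` already range over `{a, b}`. If moreover `a < c < b`, then `C {a, c} c` and
`C {c, b} b` still hold while `C {a, b} b` does not.
-/

open Set

variable {α : Type*}

lemma isGreatest_iUnion [Preorder α] {ι : Type*} {A : ι → Set α} {y : ι → α} {z : α}
    (hA : ∀ i, IsGreatest (A i) (y i)) (hz : IsGreatest (range y) z) :
    IsGreatest (⋃ i, A i) z := by
  obtain ⟨⟨i, rfl⟩, hle⟩ := hz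
  refine ⟨mem_iUnion.2 ⟨i, (hA i).1⟩, fun x hx => ?_⟩
  obtain ⟨j, hj⟩ := mem_iUnion.1 hx
  exact ((hA j).2 hj).trans (hle ⟨j, rfl⟩)

lemma eq_singleton_of_subset_pair_of_ne {A : Set α} {a b y : α} (hy : y ∈ A)
    (hsub : A ⊆ {a, b}) (hne : A ≠ {a, b}) : A = {y} := by
  rcases (nonempty_of_mem hy).subset_pair_iff_eq.1 hsub with rfl | rfl | h
  · exact (mem_singleton_iff.1 hy) ▸ rfl
  · exact (mem_singleton_iff.1 hy) ▸ rfl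
  · exact absurd h hne

lemma iUnion_ne_pair {ι : Type*} {A : ι → Set α} {y : ι → α} {a b : α}
    (hy : ∀ i, y i ∈ A i) (hA : ∀ i, A i ≠ {a, b}) (hrange : range y ≠ {a, b}) :
    (⋃ i, A i) ≠ {a, b} := by
  intro hU
  have hA_eq (i : ι) : A i = {y i} :=
    eq_singleton_of_subset_pair_of_ne (hy i) (hU ▸ subset_iUnion A i) (hA i)
  simp only [hA_eq, iUnion_singleton_eq_range] at hU
  exact hrange hU

def GreatestOffPair [Preorder α] (a b : α) (A : Set α) (y : α) : Prop :=
  IsGreatest A y ∧ A ≠ {a, b}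

namespace GreatestOffPair

variable {a b : α}

section Preorder

variable [Preorder α]

lemma singleton (hab : a ≠ b) (x : α) : GreatestOffPair a b {x} x := by
  refine ⟨isGreatest_singleton, fun h => hab ?_⟩
  rw [← pair_eq_singleton, pair_eq_pair_iff] at h
  grind

lemma trans_iUnion {ι : Type*} {A : ι → Set α} {y : ι → α} {z : α}
    (hA : ∀ i, GreatestOffPair a b (A i) (y i)) (hz : GreatestOffPair a b (range y) z) :
    GreatestOffPair a b (⋃ i, A i) z :=
  ⟨isGreatest_iUnion (fun i => (hA i).1) hz.1,
    iUnion_ne_pair (fun i => (hA i).1.1) (fun i => (hA i).2) hz.2⟩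

lemma pair {x y : α} (hxy : x ≤ y) (hne : ({x, y} : Set α) ≠ {a, b}) :
    GreatestOffPair a b {x, y} y := by
  refine ⟨⟨mem_insert_of_mem x rfl, ?_⟩, hne⟩
  rintro z (rfl | rfl)
  exacts [hxy, le_rfl]

lemma not_transitive_pair {c : α} (hac : a < c) (hcb : c < b) :
    ¬ Transitive (fun x y : α => GreatestOffPair a b {x, y} y) := by
  intro htrans
  have hac' : GreatestOffPair a b {a, c} c :=
    pair hac.le (by simp [pair_eq_pair_iff, hcb.ne, hac.ne'])
  have hcb' : GreatestOffPair a b {c, b} b :=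
    pair hcb.le (by simp [pair_eq_pair_iff, hcb.ne, hac.ne'])
  exact (htrans hac' hcb').2 rfl

end Preorder

lemma unique [PartialOrder α] {A : Set α} {y z : α} (hy : GreatestOffPair a b A y)
    (hz : GreatestOffPair a b A z) : y = z :=
  hy.1.unique hz.1

end GreatestOffPair

theorem stmt12 :
    ∃ (X : Type) (C : Set X → X → Prop),
      Nat.card X = 3 ∧
      (∀ x : X, C {x} x) ∧
      (∀ (I : Type) (A : I → Set X) (y : I → X) (z : X),
        (∀ i, C (A i) (y i)) → C (Set.range y) z → C (⋃ i, A i) z) ∧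
      (∀ (A : Set X) (y z : X), C A y → C A z → y = z) ∧
      ¬ Transitive (fun x y : X => C {x, y} y) :=
  ⟨Fin 3, GreatestOffPair 0 2, by simp, GreatestOffPair.singleton (by decide),
    fun _ _ _ _ => GreatestOffPair.trans_iUnion, fun _ _ _ => GreatestOffPair.unique,
    GreatestOffPair.not_transitive_pair (c := 1) (by decide) (by decide)⟩
end

section
/- (Main theorem, part 2: right Kan extension property) In the setting of part 1 — categories A, B, C, E; J : A ⥤ B full and faithful with adjunction adj : R ⊣ J, unit β; V : B ⥤ C, P : E ⥤ C, K : A ⥤ E with K ⋙ P = J ⋙ V; K̄ : B ⥤ E with K̄ ⋙ P = V; ϑ : K̄ ⟶ R ⋙ K pointwise P-cartesian over V.map ∘ β; and ι : J ⋙ K̄ ≅ K the natural isomorphism with P-image the identity and K̄.map (β.app X) ≫ ι.hom.app (R.obj X) = ϑ.app X — the following universal property holds: for every functor H : B ⥤ E with H ⋙ P = V and every natural transformation κ : J ⋙ H ⟶ K whose components have P-image the identity (modulo eqToHom), there exists a unique natural transformation κ̄ : H ⟶ K̄ whose components have P-image the identity (modulo eqToHom) and which satisfies whiskerLeft J κ̄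 ≫ ι.hom = κ. Thus (K̄, ι) is a right Kan extension of K along J in the 2-category CAT/C. -/
open CategoryTheory

universe v₁ v₂ v₃ v₄ u₁ u₂ u₃ u₄

/-- A morphism `φ` in `E` is `P`-cartesian if every `g : L ⟶ N` lying over a factorization
`w ≫ P.map φ = P.map g` factors uniquely through `φ` over `w`. -/
def IsCartesianMor {E : Type u₁} {C : Type u₂} [Category.{v₁} E] [Category.{v₂} C]
    (P : E ⥤ C) {M N : E} (φ : M ⟶ N) : Prop :=
  ∀ {L : E} (g : L ⟶ N) (w : P.obj L ⟶ P.obj M),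
    w ≫ P.map φ = P.map g → ∃! t : L ⟶ M, P.map t = w ∧ t ≫ φ = g

/-!
A transformation `κ̄ : H ⟶ K̄` satisfies `J κ̄ ≫ ι = κ` exactly when `κ̄ ≫ ϑ` is the adjoint
transpose `H β ≫ R κ` of `κ`: one direction is naturality of `κ̄` against the unit together with
`ϑ = K̄ β ≫ ι R`, the other uses in addition the triangle identity `β J ≫ J ε = 𝟙`.
Since the components of `ϑ` are `P`-cartesian and `H β ≫ R κ` lies over `V β`, there is exactly
one such `κ̄` lying over the identity.
-/

theorem IsCartesianMor.hom_ext {E C : Type*} [Category E] [Category C] {P : E ⥤ C}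
    {M N : E} {φ : M ⟶ N} (hφ : IsCartesianMor P φ) {L : E} {t t' : L ⟶ M}
    (hP : P.map t = P.map t') (hcomp : t ≫ φ = t' ≫ φ) : t = t' :=
  (hφ (t' ≫ φ) (P.map t') (P.map_comp t' φ).symm).unique ⟨hP, hcomp⟩ ⟨rfl, rfl⟩

namespace CategoryTheory

theorem NatTrans.existsUnique_lift_of_isCartesianMor {B E C : Type*} [Category B]
    [Category E] [Category C] {P : E ⥤ C} {F G H : B ⥤ E} (ϑ : F ⟶ G)
    (hϑ : ∀ X, IsCartesianMor P (ϑ.app X)) (μ : H ⟶ G) (w : H ⋙ P ⟶ F ⋙ P)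
    (hw : w ≫ Functor.whiskerRight ϑ P = Functor.whiskerRight μ P) :
    ∃! τ : H ⟶ F, Functor.whiskerRight τ P = w ∧ τ ≫ ϑ = μ := by
  have lift (X : B) : ∃! t : H.obj X ⟶ F.obj X, P.map t = w.app X ∧ t ≫ ϑ.app X = μ.app X :=
    hϑ X (μ.app X) (w.app X) (by simpa using NatTrans.congr_app hw X)
  choose t ht huniq using lift
  have naturality {X Y : B} (f : X ⟶ Y) : H.map f ≫ t Y = t X ≫ F.map f := by
    refine IsCartesianMor.hom_ext (hϑ Y) ?_ ?_
    · simpa [(ht X).1, (ht Y).1] using w.naturality f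
    · simp [(ht Y).2, reassoc_of% (ht X).2]
  refine ⟨{ app := t, naturality := @naturality }, ⟨?_, ?_⟩, ?_⟩
  · ext X
    exact (ht X).1
  · ext X
    exact (ht X).2
  · rintro τ ⟨hτP, hτϑ⟩
    ext X
    exact huniq X _ ⟨NatTrans.congr_app hτP X, NatTrans.congr_app hτϑ X⟩

theorem Adjunction.whiskerLeft_comp_eq_iff_comp_eq {A B E : Type*} [Category A]
    [Category B] [Category E] {J : A ⥤ B} {R : B ⥤ A} (adj : R ⊣ J) {Kbar : B ⥤ E} {K : A ⥤ E}
    {ϑ : Kbar ⟶ R ⋙ K} {ι : J ⋙ Kbar ⟶ K}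
    (hιϑ : ∀ X, Kbar.map (adj.unit.app X) ≫ ι.app (R.obj X) = ϑ.app X)
    {H : B ⥤ E} (κ : J ⋙ H ⟶ K) (κbar : H ⟶ Kbar) :
    Functor.whiskerLeft J κbar ≫ ι = κ ↔
      κbar ≫ ϑ = Functor.whiskerRight adj.unit H ≫ Functor.whiskerLeft R κ := by
  constructor
  · rintro rfl
    ext X
    simp [← hιϑ X]
  · intro h
    ext a
    have hϑ := NatTrans.congr_app h (J.obj a)
    simp only [NatTrans.comp_app, Functor.whiskerRight_app, Functor.whiskerLeft_app,
      Functor.id_obj, Functor.comp_obj] at hϑ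
    calc κbar.app (J.obj a) ≫ ι.app a
        = κbar.app (J.obj a) ≫ Kbar.map (adj.unit.app (J.obj a) ≫ J.map (adj.counit.app a)) ≫
            ι.app a := by
          rw [adj.right_triangle_components, Kbar.map_id, Category.id_comp]
      _ = (κbar.app (J.obj a) ≫ ϑ.app (J.obj a)) ≫ K.map (adj.counit.app a) := by
          rw [← hιϑ, Functor.map_comp]
          simp only [Category.assoc, ← ι.naturality, Functor.comp_map, Functor.id_obj]
      _ = κ.app a := by
          have hκ := κ.naturality (adj.counit.app a)
          simp only [Functor.comp_obj, Functor.comp_map] at hκ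
          rw [hϑ, Category.assoc, ← hκ, ← H.map_comp_assoc, adj.right_triangle_components,
            H.map_id, Category.id_comp]
          rfl

end CategoryTheory

theorem stmt17_general {A : Type u₁} {B : Type u₂} {C : Type u₃} {E : Type u₄}
    [Category.{v₁} A] [Category.{v₂} B] [Category.{v₃} C] [Category.{v₄} E]
    (J : A ⥤ B) (R : B ⥤ A) (adj : R ⊣ J)
    (V : B ⥤ C) (P : E ⥤ C) (K : A ⥤ E) (hK : K ⋙ P = J ⋙ V)
    (Kbar : B ⥤ E) (hKbar : Kbar ⋙ P = V)
    (ϑ : Kbar ⟶ R ⋙ K)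
    (hcart : ∀ X : B, IsCartesianMor P (ϑ.app X))
    (hover : ∀ X : B, P.map (ϑ.app X) =
      eqToHom (Functor.congr_obj hKbar X) ≫ V.map (adj.unit.app X) ≫
        eqToHom (Functor.congr_obj hK (R.obj X)).symm)
    (ι : J ⋙ Kbar ≅ K)
    (hιϑ : ∀ X : B, Kbar.map (adj.unit.app X) ≫ ι.hom.app (R.obj X) = ϑ.app X) :
    ∀ (H : B ⥤ E) (hH : H ⋙ P = V) (κ : J ⋙ H ⟶ K),
      (∀ a : A, P.map (κ.app a) =
        eqToHom ((Functor.congr_obj hH (J.obj a)).trans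
          (Functor.congr_obj hK a).symm)) →
      ∃! κbar : H ⟶ Kbar,
        (∀ X : B, P.map (κbar.app X) =
          eqToHom ((Functor.congr_obj hH X).trans
            (Functor.congr_obj hKbar X).symm)) ∧
        Functor.whiskerLeft J κbar ≫ ι.hom = κ := by
  intro H hH κ hκ
  have transpose_over : eqToHom (hH.trans hKbar.symm) ≫ Functor.whiskerRight ϑ P =
      Functor.whiskerRight (Functor.whiskerRight adj.unit H ≫ Functor.whiskerLeft R κ) P := by
    ext X
    have hHβ := Functor.congr_hom hH (adj.unit.app X)
    simp only [Functor.comp_map] at hHβ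
    simp [hover, hκ, hHβ]
  refine (existsUnique_congr fun κbar => and_congr ?_ ?_).mpr
    (NatTrans.existsUnique_lift_of_isCartesianMor ϑ hcart _ _ transpose_over)
  · exact ⟨fun h => by ext X; simpa using h X, fun h X => by simpa using NatTrans.congr_app h X⟩
  · exact adj.whiskerLeft_comp_eq_iff_comp_eq hιϑ κ κbar

theorem stmt17 {A : Type u₁} {B : Type u₂} {C : Type u₃} {E : Type u₄}
    [Category.{v₁} A] [Category.{v₂} B] [Category.{v₃} C] [Category.{v₄} E]
    (J : A ⥤ B) [J.Full] [J.Faithful] (R : B ⥤ A) (adj : R ⊣ J)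
    (V : B ⥤ C) (P : E ⥤ C) (K : A ⥤ E) (hK : K ⋙ P = J ⋙ V)
    (Kbar : B ⥤ E) (hKbar : Kbar ⋙ P = V)
    (ϑ : Kbar ⟶ R ⋙ K)
    (hcart : ∀ X : B, IsCartesianMor P (ϑ.app X))
    (hover : ∀ X : B, P.map (ϑ.app X) =
      eqToHom (Functor.congr_obj hKbar X) ≫ V.map (adj.unit.app X) ≫
        eqToHom (Functor.congr_obj hK (R.obj X)).symm)
    (ι : J ⋙ Kbar ≅ K)
    (hι : ∀ a : A, P.map (ι.hom.app a) =
      eqToHom ((Functor.congr_obj hKbar (J.obj a)).trans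
        (Functor.congr_obj hK a).symm))
    (hιϑ : ∀ X : B, Kbar.map (adj.unit.app X) ≫ ι.hom.app (R.obj X) = ϑ.app X) :
    ∀ (H : B ⥤ E) (hH : H ⋙ P = V) (κ : J ⋙ H ⟶ K),
      (∀ a : A, P.map (κ.app a) =
        eqToHom ((Functor.congr_obj hH (J.obj a)).trans
          (Functor.congr_obj hK a).symm)) →
      ∃! κbar : H ⟶ Kbar,
        (∀ X : B, P.map (κbar.app X) =
          eqToHom ((Functor.congr_obj hH X).trans
            (Functor.congr_obj hKbar X).symm)) ∧
        Functor.whiskerLeft J κbar ≫ ι.hom = κ :=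
  stmt17_general J R adj V P K hK Kbar hKbar ϑ hcart hover ι hιϑ
end

section
/- (Burroni) Let A, B, C, E be categories; J : A ⥤ B a full and faithful functor with left adjoint R : B ⥤ A via an adjunction with unit β : 𝟭 B ⟶ R ⋙ J; V : B ⥤ C a functor; and let P : E ⥤ C be a (cloven) fibration, i.e. for every object N of E and every morphism u : X ⟶ P.obj N in C there exists a P-cartesian morphism φ : M ⟶ N in E with P.obj M = X and P.map φ = u (modulo eqToHom). Then every functor K : A ⥤ E with K ⋙ P = J ⋙ V admits a functor K̄ : B ⥤ E with K̄ ⋙ P = V and a natural isomorphism J ⋙ K̄ ≅ K whose components have P-image the identity (modulo eqToHom), such that the natural transformation K̄ ⟶ R ⋙ K obtained by composing K̄.map (β.app X) with this isomorphism is pointwise P-cartesian with P-image V.map (β.app X); and K̄ is, up to natural isomorphism with P-image the identity, uniquely determined by the property of mapping β to a pointwise P-cartesian natural transformation. -/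
open CategoryTheory

universe v₁ v₂ v₃ v₄ u₁ u₂ u₃ u₄

namespace Stmt18Aux

section Cart

variable {E : Type u₄} {C : Type u₃} [Category.{v₄} E] [Category.{v₃} C] {P : E ⥤ C}

lemma cart_ext {M N : E} {φ : M ⟶ N} (hφ : IsCartesianMor P φ)
    {L : E} {t t' : L ⟶ M} (h1 : P.map t = P.map t') (h2 : t ≫ φ = t' ≫ φ) : t = t' := by
  obtain ⟨u, -, hu⟩ := hφ (t ≫ φ) (P.map t) (by rw [← P.map_comp])
  rw [hu t ⟨rfl, rfl⟩, hu t' ⟨h1.symm, h2.symm⟩]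

/-- The chosen lift through a cartesian morphism. -/
noncomputable def cl {M N : E} {φ : M ⟶ N} (hφ : IsCartesianMor P φ)
    {L : E} (g : L ⟶ N) (w : P.obj L ⟶ P.obj M) (hw : w ≫ P.map φ = P.map g) : L ⟶ M :=
  (hφ g w hw).exists.choose

lemma cl_map {M N : E} {φ : M ⟶ N} (hφ : IsCartesianMor P φ)
    {L : E} (g : L ⟶ N) (w : P.obj L ⟶ P.obj M) (hw : w ≫ P.map φ = P.map g) :
    P.map (cl hφ g w hw) = w :=
  (hφ g w hw).exists.choose_spec.1

lemma cl_comp {M N : E} {φ : M ⟶ N} (hφ : IsCartesianMor P φ)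
    {L : E} (g : L ⟶ N) (w : P.obj L ⟶ P.obj M) (hw : w ≫ P.map φ = P.map g) :
    cl hφ g w hw ≫ φ = g :=
  (hφ g w hw).exists.choose_spec.2

lemma cart_comp_iso {M N N' : E} {φ : M ⟶ N} (hφ : IsCartesianMor P φ) (e : N ⟶ N') [IsIso e] :
    IsCartesianMor P (φ ≫ e) := by
  intro L g w hw
  rw [P.map_comp, ← Category.assoc] at hw
  have hw' : w ≫ P.map φ = P.map (g ≫ inv e) := by
    rw [P.map_comp, P.map_inv, ← hw]
    simp
  obtain ⟨t, ht, hu⟩ := hφ (g ≫ inv e) w hw'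
  refine ⟨t, ⟨ht.1, by rw [← Category.assoc, ht.2]; simp⟩, fun t' ht' => hu t' ⟨ht'.1, ?_⟩⟩
  have : (t' ≫ φ) ≫ e = g := by rw [Category.assoc]; exact ht'.2
  rw [← this]; simp

lemma cart_isIso {M N : E} {φ : M ⟶ N} (hφ : IsCartesianMor P φ)
    (hi : IsIso (P.map φ)) : IsIso φ := by
  obtain ⟨t, ht, -⟩ := hφ (𝟙 N) (inv (P.map φ)) (by simp)
  refine ⟨t, ?_, ht.2⟩
  refine cart_ext hφ ?_ ?_
  · rw [P.map_comp, ht.1]; simp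
  · rw [Category.assoc, ht.2]; simp

end Cart

/-- Bundled data for the Burroni lifting construction. -/
structure Setup (A : Type u₁) (B : Type u₂) (C : Type u₃) (E : Type u₄)
    [Category.{v₁} A] [Category.{v₂} B] [Category.{v₃} C] [Category.{v₄} E] where
  J : A ⥤ B
  R : B ⥤ A
  adj : R ⊣ J
  V : B ⥤ C
  P : E ⥤ C
  hfib : ∀ (N : E) (X : C) (u : X ⟶ P.obj N),
    ∃ (M : E) (φ : M ⟶ N) (h : P.obj M = X),
      IsCartesianMor P φ ∧ P.map φ = eqToHom h ≫ u
  K : A ⥤ E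
  hK : K ⋙ P = J ⋙ V

namespace Setup

variable {A : Type u₁} {B : Type u₂} {C : Type u₃} {E : Type u₄}
    [Category.{v₁} A] [Category.{v₂} B] [Category.{v₃} C] [Category.{v₄} E]
    (S : Setup A B C E)

/-- The unit, with reassociated type. -/
def βo (X : B) : X ⟶ S.J.obj (S.R.obj X) := S.adj.unit.app X

/-- The counit, with reassociated type. -/
def εo (a : A) : S.R.obj (S.J.obj a) ⟶ a := S.adj.counit.app a

lemma unit_nat {X Y : B} (f : X ⟶ Y) :
    f ≫ S.βo Y = S.βo X ≫ S.J.map (S.R.map f) :=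
  S.adj.unit.naturality f

lemma counit_nat {a b : A} (f : a ⟶ b) :
    S.R.map (S.J.map f) ≫ S.εo b = S.εo a ≫ f :=
  S.adj.counit.naturality f

lemma tri (X : B) : S.R.map (S.βo X) ≫ S.εo (S.R.obj X) = 𝟙 (S.R.obj X) :=
  S.adj.left_triangle_components X

lemma tri' (a : A) : S.βo (S.J.obj a) ≫ S.J.map (S.εo a) = 𝟙 (S.J.obj a) :=
  S.adj.right_triangle_components a

lemma hKobj (a : A) : S.P.obj (S.K.obj a) = S.V.obj (S.J.obj a) :=
  Functor.congr_obj S.hK a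

lemma hKmap {a b : A} (f : a ⟶ b) :
    S.P.map (S.K.map f) =
      eqToHom (S.hKobj a) ≫ S.V.map (S.J.map f) ≫ eqToHom (S.hKobj b).symm := by
  have h := Functor.congr_hom S.hK f
  simp only [Functor.comp_map] at h
  exact h

/-- The chosen cartesian lifting data at `X : B`. -/
noncomputable def pack (X : B) :=
  S.hfib (S.K.obj (S.R.obj X)) (S.V.obj X)
    (S.V.map (S.βo X) ≫ eqToHom (S.hKobj (S.R.obj X)).symm)

noncomputable def Mo (X : B) : E := (S.pack X).choose

noncomputable def φo (X : B) : S.Mo X ⟶ S.K.obj (S.R.obj X) :=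
  (S.pack X).choose_spec.choose

lemma ho (X : B) : S.P.obj (S.Mo X) = S.V.obj X :=
  (S.pack X).choose_spec.choose_spec.choose

lemma cart (X : B) : IsCartesianMor S.P (S.φo X) :=
  (S.pack X).choose_spec.choose_spec.choose_spec.1

lemma φo_map (X : B) :
    S.P.map (S.φo X) =
      eqToHom (S.ho X) ≫ S.V.map (S.βo X) ≫ eqToHom (S.hKobj (S.R.obj X)).symm :=
  (S.pack X).choose_spec.choose_spec.choose_spec.2

lemma sq {X Y : B} (f : X ⟶ Y) :
    (eqToHom (S.ho X) ≫ S.V.map f ≫ eqToHom (S.ho Y).symm) ≫ S.P.map (S.φo Y)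
      = S.P.map (S.φo X ≫ S.K.map (S.R.map f)) := by
  have h : S.V.map f ≫ S.V.map (S.βo Y)
      = S.V.map (S.βo X) ≫ S.V.map (S.J.map (S.R.map f)) := by
    rw [← S.V.map_comp, ← S.V.map_comp, S.unit_nat f]
  rw [S.P.map_comp, S.φo_map X, S.φo_map Y, S.hKmap]
  simp [reassoc_of% h]

noncomputable def Kmap {X Y : B} (f : X ⟶ Y) : S.Mo X ⟶ S.Mo Y :=
  cl (S.cart Y) (S.φo X ≫ S.K.map (S.R.map f))
    (eqToHom (S.ho X) ≫ S.V.map f ≫ eqToHom (S.ho Y).symm) (S.sq f)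

lemma Kmap_map {X Y : B} (f : X ⟶ Y) :
    S.P.map (S.Kmap f) = eqToHom (S.ho X) ≫ S.V.map f ≫ eqToHom (S.ho Y).symm :=
  cl_map _ _ _ _

lemma Kmap_comp {X Y : B} (f : X ⟶ Y) :
    S.Kmap f ≫ S.φo Y = S.φo X ≫ S.K.map (S.R.map f) :=
  cl_comp _ _ _ _

noncomputable def Kbar : B ⥤ E where
  obj := S.Mo
  map := S.Kmap
  map_id X := by
    refine cart_ext (S.cart X) ?_ ?_
    · rw [S.Kmap_map]; simp
    · rw [S.Kmap_comp]; simp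
  map_comp {X Y Z} f g := by
    refine cart_ext (S.cart Z) ?_ ?_
    · rw [S.Kmap_map, S.P.map_comp, S.Kmap_map, S.Kmap_map]; simp
    · rw [S.Kmap_comp, Category.assoc, S.Kmap_comp, ← Category.assoc, S.Kmap_comp]
      simp

lemma hKbar : S.Kbar ⋙ S.P = S.V :=
  CategoryTheory.Functor.ext S.ho (fun X Y f => S.Kmap_map f)

noncomputable def ιapp (a : A) : S.Kbar.obj (S.J.obj a) ⟶ S.K.obj a :=
  S.φo (S.J.obj a) ≫ S.K.map (S.εo a)

lemma ιapp_map (a : A) :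
    S.P.map (S.ιapp a) = eqToHom ((S.ho (S.J.obj a)).trans (S.hKobj a).symm) := by
  have h : S.V.map (S.βo (S.J.obj a)) ≫ S.V.map (S.J.map (S.εo a)) = 𝟙 _ := by
    rw [← S.V.map_comp, S.tri', S.V.map_id]
  show S.P.map (S.φo (S.J.obj a) ≫ S.K.map (S.εo a)) = _
  rw [S.P.map_comp, S.φo_map, S.hKmap]
  simp [reassoc_of% h]

noncomputable def ιnat : S.J ⋙ S.Kbar ⟶ S.K where
  app := S.ιapp
  naturality a b f := by
    show S.Kmap (S.J.map f) ≫ S.ιapp b = S.ιapp a ≫ S.K.map f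
    show S.Kmap (S.J.map f) ≫ S.φo (S.J.obj b) ≫ S.K.map (S.εo b) =
      (S.φo (S.J.obj a) ≫ S.K.map (S.εo a)) ≫ S.K.map f
    rw [← Category.assoc, S.Kmap_comp, Category.assoc, Category.assoc,
      ← S.K.map_comp, ← S.K.map_comp, S.counit_nat f]

lemma ιapp_isIso [S.J.Full] [S.J.Faithful] (a : A) : IsIso (S.ιapp a) := by
  haveI : IsIso (S.adj.counit.app a) := inferInstance
  haveI : IsIso (S.εo a) := by
    show IsIso (S.adj.counit.app a); infer_instance
  have hc : IsCartesianMor S.P (S.ιapp a) :=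
    cart_comp_iso (S.cart (S.J.obj a)) (S.K.map (S.εo a))
  refine cart_isIso hc ?_
  rw [S.ιapp_map]
  exact (eqToIso ((S.ho (S.J.obj a)).trans (S.hKobj a).symm)).isIso_hom

noncomputable def ι [S.J.Full] [S.J.Faithful] : S.J ⋙ S.Kbar ≅ S.K := by
  haveI : ∀ a : A, IsIso (S.ιnat.app a) := fun a => S.ιapp_isIso a
  haveI := NatIso.isIso_of_isIso_app S.ιnat
  exact asIso S.ιnat

lemma ι_hom_app [S.J.Full] [S.J.Faithful] (a : A) : S.ι.hom.app a = S.ιapp a := rfl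

lemma keyEq [S.J.Full] [S.J.Faithful] (X : B) :
    S.Kbar.map (S.βo X) ≫ S.ι.hom.app (S.R.obj X) = S.φo X := by
  rw [S.ι_hom_app]
  show S.Kmap (S.βo X) ≫ S.ιapp (S.R.obj X) = S.φo X
  show S.Kmap (S.βo X) ≫ S.φo (S.J.obj (S.R.obj X)) ≫ S.K.map (S.εo (S.R.obj X)) = S.φo X
  rw [← Category.assoc, S.Kmap_comp, Category.assoc, ← S.K.map_comp, S.tri,
    S.K.map_id, Category.comp_id]

lemma keyCart [S.J.Full] [S.J.Faithful] (X : B) :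
    IsCartesianMor S.P (S.Kbar.map (S.βo X) ≫ S.ι.hom.app (S.R.obj X)) := by
  rw [S.keyEq X]
  exact S.cart X

lemma keyMap [S.J.Full] [S.J.Faithful] (X : B) :
    S.P.map (S.Kbar.map (S.βo X) ≫ S.ι.hom.app (S.R.obj X)) =
      eqToHom (S.ho X) ≫ S.V.map (S.βo X) ≫ eqToHom (S.hKobj (S.R.obj X)).symm := by
  rw [S.keyEq X]
  exact S.φo_map X

section Uniq

variable (L : B ⥤ E) (hL : L ⋙ S.P = S.V) (lam : S.J ⋙ L ≅ S.K)
  (hlam2 : ∀ X : B,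
    IsCartesianMor S.P (L.map (S.βo X) ≫ lam.hom.app (S.R.obj X)) ∧
    S.P.map (L.map (S.βo X) ≫ lam.hom.app (S.R.obj X)) =
      eqToHom (Functor.congr_obj hL X) ≫ S.V.map (S.βo X) ≫
        eqToHom (S.hKobj (S.R.obj X)).symm)

lemma hLmap {X Y : B} (f : X ⟶ Y) :
    S.P.map (L.map f) = eqToHom (Functor.congr_obj hL X) ≫ S.V.map f ≫
      eqToHom (Functor.congr_obj hL Y).symm := by
  have h := Functor.congr_hom hL f
  simp only [Functor.comp_map] at h
  exact h

include hlam2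

lemma hwe (X : B) :
    eqToHom ((Functor.congr_obj hL X).trans (S.ho X).symm) ≫ S.P.map (S.φo X) =
      S.P.map (L.map (S.βo X) ≫ lam.hom.app (S.R.obj X)) := by
  rw [S.φo_map, (hlam2 X).2]
  simp

noncomputable def eapp (X : B) : L.obj X ⟶ S.Mo X :=
  cl (S.cart X) (L.map (S.βo X) ≫ lam.hom.app (S.R.obj X))
    (eqToHom ((Functor.congr_obj hL X).trans (S.ho X).symm)) (S.hwe L hL lam hlam2 X)

lemma eapp_map (X : B) :
    S.P.map (S.eapp L hL lam hlam2 X) =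
      eqToHom ((Functor.congr_obj hL X).trans (S.ho X).symm) :=
  cl_map _ _ _ _

lemma eapp_comp (X : B) :
    S.eapp L hL lam hlam2 X ≫ S.φo X =
      L.map (S.βo X) ≫ lam.hom.app (S.R.obj X) :=
  cl_comp _ _ _ _

noncomputable def enat : L ⟶ S.Kbar where
  app X := S.eapp L hL lam hlam2 X
  naturality X Y f := by
    show L.map f ≫ S.eapp L hL lam hlam2 Y = S.eapp L hL lam hlam2 X ≫ S.Kmap f
    refine cart_ext (S.cart Y) ?_ ?_
    · rw [S.P.map_comp, S.P.map_comp, S.eapp_map, S.eapp_map, S.hLmap L hL f, S.Kmap_map]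
      simp
    · calc (L.map f ≫ S.eapp L hL lam hlam2 Y) ≫ S.φo Y
          = L.map f ≫ (S.eapp L hL lam hlam2 Y ≫ S.φo Y) := by rw [Category.assoc]
        _ = L.map (f ≫ S.βo Y) ≫ lam.hom.app (S.R.obj Y) := by
            rw [S.eapp_comp, L.map_comp, Category.assoc]
        _ = L.map (S.βo X ≫ S.J.map (S.R.map f)) ≫ lam.hom.app (S.R.obj Y) := by
            rw [S.unit_nat f]
        _ = L.map (S.βo X) ≫ L.map (S.J.map (S.R.map f)) ≫ lam.hom.app (S.R.obj Y) := by
            rw [L.map_comp, Category.assoc]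
        _ = L.map (S.βo X) ≫ lam.hom.app (S.R.obj X) ≫ S.K.map (S.R.map f) := by
            rw [show L.map (S.J.map (S.R.map f)) ≫ lam.hom.app (S.R.obj Y)
              = lam.hom.app (S.R.obj X) ≫ S.K.map (S.R.map f) from lam.hom.naturality (S.R.map f)]
        _ = (S.eapp L hL lam hlam2 X ≫ S.φo X) ≫ S.K.map (S.R.map f) := by
            rw [S.eapp_comp, Category.assoc]
        _ = (S.eapp L hL lam hlam2 X ≫ S.Kmap f) ≫ S.φo Y := by
            rw [Category.assoc, Category.assoc, S.Kmap_comp]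

lemma hwe' (X : B) :
    eqToHom ((S.ho X).trans (Functor.congr_obj hL X).symm) ≫
      S.P.map (L.map (S.βo X) ≫ lam.hom.app (S.R.obj X)) = S.P.map (S.φo X) := by
  rw [S.φo_map, (hlam2 X).2]
  simp

noncomputable def eapp' (X : B) : S.Mo X ⟶ L.obj X :=
  cl (hlam2 X).1 (S.φo X) (eqToHom ((S.ho X).trans (Functor.congr_obj hL X).symm))
    (S.hwe' L hL lam hlam2 X)

lemma eapp'_map (X : B) :
    S.P.map (S.eapp' L hL lam hlam2 X) =
      eqToHom ((S.ho X).trans (Functor.congr_obj hL X).symm) :=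
  cl_map (hlam2 X).1 _ _ _

lemma eapp'_comp (X : B) :
    S.eapp' L hL lam hlam2 X ≫ (L.map (S.βo X) ≫ lam.hom.app (S.R.obj X)) = S.φo X :=
  cl_comp (hlam2 X).1 _ _ _

lemma eapp_isIso (X : B) : IsIso (S.eapp L hL lam hlam2 X) := by
  refine ⟨S.eapp' L hL lam hlam2 X, ?_, ?_⟩
  · refine cart_ext (hlam2 X).1 ?_ ?_
    · rw [S.P.map_comp, S.eapp_map, S.eapp'_map]
      simp
    · rw [Category.assoc, S.eapp'_comp, S.eapp_comp]
      simp
  · refine cart_ext (S.cart X) ?_ ?_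
    · rw [S.P.map_comp, S.eapp'_map, S.eapp_map]
      simp
    · rw [Category.assoc, S.eapp_comp, S.eapp'_comp]
      simp

lemma uniq : ∃ e : L ≅ S.Kbar, ∀ X : B, S.P.map (e.hom.app X) =
    eqToHom ((Functor.congr_obj hL X).trans (S.ho X).symm) := by
  haveI : ∀ X : B, IsIso ((S.enat L hL lam hlam2).app X) :=
    fun X => S.eapp_isIso L hL lam hlam2 X
  haveI := NatIso.isIso_of_isIso_app (S.enat L hL lam hlam2)
  exact ⟨asIso (S.enat L hL lam hlam2), fun X => S.eapp_map L hL lam hlam2 X⟩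

end Uniq

end Setup

end Stmt18Aux

open Stmt18Aux in
theorem stmt18 {A : Type u₁} {B : Type u₂} {C : Type u₃} {E : Type u₄}
    [Category.{v₁} A] [Category.{v₂} B] [Category.{v₃} C] [Category.{v₄} E]
    (J : A ⥤ B) [J.Full] [J.Faithful] (R : B ⥤ A) (adj : R ⊣ J)
    (V : B ⥤ C) (P : E ⥤ C)
    (hfib : ∀ (N : E) (X : C) (u : X ⟶ P.obj N),
      ∃ (M : E) (φ : M ⟶ N) (h : P.obj M = X),
        IsCartesianMor P φ ∧ P.map φ = eqToHom h ≫ u)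
    (K : A ⥤ E) (hK : K ⋙ P = J ⋙ V) :
    ∃ (Kbar : B ⥤ E) (hKbar : Kbar ⋙ P = V) (ι : J ⋙ Kbar ≅ K),
      (∀ a : A, P.map (ι.hom.app a) =
        eqToHom ((Functor.congr_obj hKbar (J.obj a)).trans
          (Functor.congr_obj hK a).symm)) ∧
      (∀ X : B,
        IsCartesianMor P (Kbar.map (adj.unit.app X) ≫ ι.hom.app (R.obj X)) ∧
        P.map (Kbar.map (adj.unit.app X) ≫ ι.hom.app (R.obj X)) =
          eqToHom (Functor.congr_obj hKbar X) ≫ V.map (adj.unit.app X) ≫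
            eqToHom (Functor.congr_obj hK (R.obj X)).symm) ∧
      (∀ (L : B ⥤ E) (hL : L ⋙ P = V) (lam : J ⋙ L ≅ K),
        (∀ a : A, P.map (lam.hom.app a) =
          eqToHom ((Functor.congr_obj hL (J.obj a)).trans
            (Functor.congr_obj hK a).symm)) →
        (∀ X : B,
          IsCartesianMor P (L.map (adj.unit.app X) ≫ lam.hom.app (R.obj X)) ∧
          P.map (L.map (adj.unit.app X) ≫ lam.hom.app (R.obj X)) =
            eqToHom (Functor.congr_obj hL X) ≫ V.map (adj.unit.app X) ≫
              eqToHom (Functor.congr_obj hK (R.obj X)).symm) →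
        ∃ e : L ≅ Kbar, ∀ X : B, P.map (e.hom.app X) =
          eqToHom ((Functor.congr_obj hL X).trans
            (Functor.congr_obj hKbar X).symm)) := by
  set S : Stmt18Aux.Setup A B C E := ⟨J, R, adj, V, P, hfib, K, hK⟩ with hS
  haveI hf : S.J.Full := inferInstanceAs J.Full
  haveI hff : S.J.Faithful := inferInstanceAs J.Faithful
  refine ⟨S.Kbar, S.hKbar, S.ι, fun a => ?_, fun X => ⟨?_, ?_⟩,
    fun L hL lam hlam1 hlam2 => ?_⟩
  · exact S.ιapp_map a
  · exact S.keyCart X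
  · exact S.keyMap X
  · exact S.uniq L hL lam hlam2
end
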